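/- Let E be a real Hilbert space and let f : E → ℝ be differentiable with M-Lipschitz gradient, M ≥ 0. Let (Ω, μ) be a probability space, let ζ ≥ 1 be a natural number, α > 0 with 2·α·√ζ > M·α², and set α_i = α/√ζ. Let U_i : Ω → E and Ĝ_i : Ω → E (for i = 0, …, ζ) be measurable maps with all quantities below integrable, satisfying U_{i+1} = U_i + α_i·Ĝ_i almost everywhere, and for each i < ζ: ∫⟨∇f(U_i), Ĝ_i⟩ dμ ≥ ∫‖∇f(U_i)‖² dμ and ∫‖Ĝ_i‖² dμ ≤ ∫‖∇f(U_i)‖² dμ + v, where v ≥ 0. Suppose further ∫f(U_ζ) dμ − ∫f(U_0) dμ ≤ B. Then min_{i<ζ} ∫‖∇f(U_i)‖² dμ ≤ (2·B + M·α²·v) / (2·α·√ζ − M·α²). -/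

import Mathlib

/-! Along the segment `t ↦ x + t • d` the `M`-Lipschitz gradient gives the quadratic lower bound
`f x + ⟪∇f x, d⟫ - M/2 ‖d‖² ≤ f (x + d)`. Applied to the update `U (i+1) = U i + s • Ĝ i` with
`s = α / √ζ` and integrated, the two moment assumptions turn it into
`(s - M s²/2) ∫‖∇f(U i)‖² - M s² v / 2 ≤ ∫ f(U (i+1)) - ∫ f(U i)`.
Bounding each `∫‖∇f(U i)‖²` below by their minimum and summing over `i < ζ`, the right-hand sides
telescope to at most `B`, and `ζ s = α √ζ`, `ζ s² = α²` turn the result into the claimed bound. -/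

open MeasureTheory

section LipschitzGradient

variable {E : Type*} [NormedAddCommGroup E] [InnerProductSpace ℝ E] [CompleteSpace E]
  {f : E → ℝ} {M : ℝ}

lemma hasDerivAt_comp_add_smul (hf : Differentiable ℝ f) (x d : E) (t : ℝ) :
    HasDerivAt (fun t : ℝ => f (x + t • d)) (inner ℝ (gradient f (x + t • d)) d) t := by
  have hline : HasDerivAt (fun t : ℝ => x + t • d) d t := by
    simpa using ((hasDerivAt_id t).smul_const d).const_add x
  rw [inner_gradient_left]
  exact (hf _).hasFDerivAt.comp_hasDerivAt t hline

lemma neg_mul_le_inner_gradient_add_smul_sub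
    (hlip : ∀ x y, ‖gradient f x - gradient f y‖ ≤ M * ‖x - y‖) (x d : E) {t : ℝ}
    (ht : 0 ≤ t) :
    -(M * t * ‖d‖ ^ 2) ≤ inner ℝ (gradient f (x + t • d) - gradient f x) d := by
  have hnorm : ‖gradient f (x + t • d) - gradient f x‖ * ‖d‖ ≤ M * t * ‖d‖ ^ 2 := by
    calc ‖gradient f (x + t • d) - gradient f x‖ * ‖d‖
        ≤ M * ‖t • d‖ * ‖d‖ := by
          gcongr
          simpa using hlip (x + t • d) x
      _ = M * t * ‖d‖ ^ 2 := by rw [norm_smul, Real.norm_of_nonneg ht]; ring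
  linarith [neg_abs_le (inner ℝ (gradient f (x + t • d) - gradient f x) d),
    abs_real_inner_le_norm (gradient f (x + t • d) - gradient f x) d]

lemma apply_add_ge_of_lipschitz_gradient (hf : Differentiable ℝ f)
    (hlip : ∀ x y, ‖gradient f x - gradient f y‖ ≤ M * ‖x - y‖) (x d : E) :
    f x + inner ℝ (gradient f x) d - M / 2 * ‖d‖ ^ 2 ≤ f (x + d) := by
  set φ : ℝ → ℝ := fun t =>
    f (x + t • d) - t * inner ℝ (gradient f x) d + M / 2 * t ^ 2 * ‖d‖ ^ 2
  have hφ' : ∀ t, HasDerivAt φ (inner ℝ (gradient f (x + t • d) - gradient f x) d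
      + M * t * ‖d‖ ^ 2) t := by
    intro t
    refine (((hasDerivAt_comp_add_smul hf x d t).sub
      ((hasDerivAt_id t).mul_const (inner ℝ (gradient f x) d))).add
      (((hasDerivAt_pow 2 t).const_mul (M / 2)).mul_const (‖d‖ ^ 2))).congr_deriv ?_
    rw [inner_sub_left]
    ring
  have hmono : MonotoneOn φ (Set.Icc 0 1) :=
    monotoneOn_of_hasDerivWithinAt_nonneg (convex_Icc 0 1)
      (fun t _ => (hφ' t).continuousAt.continuousWithinAt)
      (fun t _ => (hφ' t).hasDerivWithinAt)
      (fun t ht => by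
        have := neg_mul_le_inner_gradient_add_smul_sub hlip x d
          (interior_subset ht : t ∈ Set.Icc (0 : ℝ) 1).1
        linarith)
  have h01 := hmono (Set.left_mem_Icc.mpr zero_le_one) (Set.right_mem_Icc.mpr zero_le_one)
    zero_le_one
  simp only [φ, zero_smul, add_zero, one_smul] at h01
  linarith

lemma integral_comp_add_smul_sub_ge (hf : Differentiable ℝ f)
    (hlip : ∀ x y, ‖gradient f x - gradient f y‖ ≤ M * ‖x - y‖)
    {Ω : Type*} [MeasurableSpace Ω] {μ : Measure Ω} {X Y G : Ω → E} {s : ℝ}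
    (hY : ∀ᵐ ω ∂μ, Y ω = X ω + s • G ω)
    (hfX : Integrable (fun ω => f (X ω)) μ) (hfY : Integrable (fun ω => f (Y ω)) μ)
    (hinner : Integrable (fun ω => inner ℝ (gradient f (X ω)) (G ω)) μ)
    (hG : Integrable (fun ω => ‖G ω‖ ^ 2) μ) :
    s * ∫ ω, inner ℝ (gradient f (X ω)) (G ω) ∂μ - M * s ^ 2 / 2 * ∫ ω, ‖G ω‖ ^ 2 ∂μ ≤
      ∫ ω, f (Y ω) ∂μ - ∫ ω, f (X ω) ∂μ := by
  have hpointwise : ∀ᵐ ω ∂μ, f (X ω) + (s * inner ℝ (gradient f (X ω)) (G ω)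
      - M * s ^ 2 / 2 * ‖G ω‖ ^ 2) ≤ f (Y ω) := by
    filter_upwards [hY] with ω hω
    have := apply_add_ge_of_lipschitz_gradient hf hlip (X ω) (s • G ω)
    rw [real_inner_smul_right, norm_smul, mul_pow, Real.norm_eq_abs, sq_abs] at this
    rw [hω]
    linarith
  have hincr : Integrable (fun ω => s * inner ℝ (gradient f (X ω)) (G ω)
      - M * s ^ 2 / 2 * ‖G ω‖ ^ 2) μ := (hinner.const_mul s).sub (hG.const_mul _)
  have hmono : ∫ ω, f (X ω) + (s * inner ℝ (gradient f (X ω)) (G ω)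
      - M * s ^ 2 / 2 * ‖G ω‖ ^ 2) ∂μ ≤ ∫ ω, f (Y ω) ∂μ :=
    integral_mono_ae (hfX.add hincr) hfY hpointwise
  rw [integral_add hfX hincr, integral_sub (hinner.const_mul s) (hG.const_mul _),
    integral_const_mul, integral_const_mul] at hmono
  linarith

end LipschitzGradient

lemma card_mul_inf'_range_sub_le_sub {R : Type*} [CommRing R] [LinearOrder R]
    [IsStrictOrderedRing R] {n : ℕ} (hn : (Finset.range n).Nonempty) {a b : ℕ → R} {c e : R}
    (hc : 0 ≤ c) (h : ∀ i < n, c * a i - e ≤ b (i + 1) - b i) :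
    n * (c * (Finset.range n).inf' hn a - e) ≤ b n - b 0 := by
  calc (n : R) * (c * (Finset.range n).inf' hn a - e)
      = ∑ _i ∈ Finset.range n, (c * (Finset.range n).inf' hn a - e) := by
        rw [Finset.sum_const, Finset.card_range, nsmul_eq_mul]
    _ ≤ ∑ i ∈ Finset.range n, (b (i + 1) - b i) :=
      Finset.sum_le_sum fun i hi => le_trans (by gcongr; exact Finset.inf'_le a hi)
        (h i (Finset.mem_range.mp hi))
    _ = b n - b 0 := Finset.sum_range_sub b n

/-- Stochastic gradient-ascent convergence (paper's Theorem 5.4).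
`f : E → ℝ` differentiable with `M`-Lipschitz gradient, `(Ω, μ)` a probability space,
`ζ ≥ 1`, `α > 0` with `2 α √ζ > M α²`, step size `αᵢ = α/√ζ`, iterates
`U_{i+1} = U_i + αᵢ Ĝ_i` a.e., with `∫⟪∇f(U_i), Ĝ_i⟫ ≥ ∫‖∇f(U_i)‖²`,
`∫‖Ĝ_i‖² ≤ ∫‖∇f(U_i)‖² + v` for each `i < ζ`, and `∫f(U_ζ) − ∫f(U_0) ≤ B`. Then
`min_{i<ζ} ∫‖∇f(U_i)‖² ≤ (2B + M α² v) / (2 α √ζ − M α²)`. -/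
theorem stochastic_gradient_ascent_min_grad_bound
    {E : Type*} [NormedAddCommGroup E] [InnerProductSpace ℝ E] [CompleteSpace E]
    {Ω : Type*} [MeasurableSpace Ω] (μ : Measure Ω)
    (f : E → ℝ) (M : ℝ) (hM : 0 ≤ M)
    (hf : Differentiable ℝ f)
    (hlip : ∀ x y, ‖gradient f x - gradient f y‖ ≤ M * ‖x - y‖)
    (ζ : ℕ) (hζ : 1 ≤ ζ) (α : ℝ) (hα : 0 < α)
    (hstep : M * α ^ 2 < 2 * α * Real.sqrt ζ)
    (v B : ℝ)
    (U Ghat : ℕ → Ω → E)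
    (hintf : ∀ i ≤ ζ, Integrable (fun ω => f (U i ω)) μ)
    (hinti : ∀ i < ζ,
      Integrable (fun ω => (inner ℝ (gradient f (U i ω)) (Ghat i ω) : ℝ)) μ)
    (hintG : ∀ i < ζ, Integrable (fun ω => ‖Ghat i ω‖ ^ 2) μ)
    (hupd : ∀ i < ζ, ∀ᵐ ω ∂μ,
      U (i + 1) ω = U i ω + (α / Real.sqrt ζ) • Ghat i ω)
    (hinner : ∀ i < ζ,
      ∫ ω, (inner ℝ (gradient f (U i ω)) (Ghat i ω) : ℝ) ∂μ ≥
        ∫ ω, ‖gradient f (U i ω)‖ ^ 2 ∂μ)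
    (hvar : ∀ i < ζ,
      ∫ ω, ‖Ghat i ω‖ ^ 2 ∂μ ≤ (∫ ω, ‖gradient f (U i ω)‖ ^ 2 ∂μ) + v)
    (hB : (∫ ω, f (U ζ ω) ∂μ) - ∫ ω, f (U 0 ω) ∂μ ≤ B) :
    (Finset.range ζ).inf' (Finset.nonempty_range_iff.mpr (by omega))
        (fun i => ∫ ω, ‖gradient f (U i ω)‖ ^ 2 ∂μ) ≤
      (2 * B + M * α ^ 2 * v) / (2 * α * Real.sqrt ζ - M * α ^ 2) := by
  have hsqrt : 0 < Real.sqrt ζ := Real.sqrt_pos.mpr (by exact_mod_cast hζ)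
  have hsq : Real.sqrt ζ ^ 2 = ζ := Real.sq_sqrt (Nat.cast_nonneg ζ)
  have hζs : (ζ : ℝ) * (α / Real.sqrt ζ) = α * Real.sqrt ζ := by
    field_simp
    exact hsq.symm
  have hζs2 : (ζ : ℝ) * (α / Real.sqrt ζ) ^ 2 = α ^ 2 := by
    field_simp
    exact hsq.symm
  have hs : 0 < α / Real.sqrt ζ := div_pos hα hsqrt
  generalize α / Real.sqrt ζ = s at hupd hζs hζs2 hs
  have hgain : 0 ≤ s - M * s ^ 2 / 2 := by
    have hζgain : (ζ : ℝ) * (s - M * s ^ 2 / 2) = (2 * α * Real.sqrt ζ - M * α ^ 2) / 2 := by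
      linear_combination hζs - M / 2 * hζs2
    nlinarith
  have hstep_bound : ∀ i < ζ, (s - M * s ^ 2 / 2) * ∫ ω, ‖gradient f (U i ω)‖ ^ 2 ∂μ
      - M * s ^ 2 / 2 * v ≤ ∫ ω, f (U (i + 1) ω) ∂μ - ∫ ω, f (U i ω) ∂μ := by
    intro i hi
    have hexpected := integral_comp_add_smul_sub_ge hf hlip (hupd i hi) (hintf i hi.le)
      (hintf (i + 1) hi) (hinti i hi) (hintG i hi)
    have hdrift := mul_le_mul_of_nonneg_left (hinner i hi) hs.le
    have hnoise := mul_le_mul_of_nonneg_left (hvar i hi) (by positivity : 0 ≤ M * s ^ 2 / 2)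
    linarith
  have htel := card_mul_inf'_range_sub_le_sub (Finset.nonempty_range_iff.mpr (by omega : ζ ≠ 0))
    (a := fun i => ∫ ω, ‖gradient f (U i ω)‖ ^ 2 ∂μ) (b := fun i => ∫ ω, f (U i ω) ∂μ)
    hgain hstep_bound
  rw [le_div_iff₀ (by linarith)]
  set m := (Finset.range ζ).inf' _ fun i => ∫ ω, ‖gradient f (U i ω)‖ ^ 2 ∂μ
  linear_combination 2 * htel + 2 * hB - 2 * m * hζs + M * (m + v) * hζs2
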